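/- Let s, γ ∈ ℂ be nonzero. The 4×4 matrix R₂ with rows (s^{-1},0,0,0), (0,γ,0,0), (0, s^{-1}−s, γ^{-1}, 0), (0,0,0,−s) satisfies the constant Yang–Baxter equation R₁₂R₁₃R₂₃ = R₂₃R₁₃R₁₂ on ℂ²⊗ℂ²⊗ℂ². -/
import Mathlib


/-- Embed a matrix on `ℂ²⊗ℂ²` into factors 1,2 of `ℂ²⊗ℂ²⊗ℂ²`. -/
noncomputable def lift12 (R : Matrix (Fin 2 × Fin 2) (Fin 2 × Fin 2) ℂ) :
    Matrix (Fin 2 × Fin 2 × Fin 2) (Fin 2 × Fin 2 × Fin 2) ℂ :=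
  fun p q => R (p.1, p.2.1) (q.1, q.2.1) * (if p.2.2 = q.2.2 then 1 else 0)

/-- Embed a matrix on `ℂ²⊗ℂ²` into factors 1,3 of `ℂ²⊗ℂ²⊗ℂ²`. -/
noncomputable def lift13 (R : Matrix (Fin 2 × Fin 2) (Fin 2 × Fin 2) ℂ) :
    Matrix (Fin 2 × Fin 2 × Fin 2) (Fin 2 × Fin 2 × Fin 2) ℂ :=
  fun p q => R (p.1, p.2.2) (q.1, q.2.2) * (if p.2.1 = q.2.1 then 1 else 0)

/-- Embed a matrix on `ℂ²⊗ℂ²` into factors 2,3 of `ℂ²⊗ℂ²⊗ℂ²`. -/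
noncomputable def lift23 (R : Matrix (Fin 2 × Fin 2) (Fin 2 × Fin 2) ℂ) :
    Matrix (Fin 2 × Fin 2 × Fin 2) (Fin 2 × Fin 2 × Fin 2) ℂ :=
  fun p q => R (p.2.1, p.2.2) (q.2.1, q.2.2) * (if p.1 = q.1 then 1 else 0)

/-- The nonstandard (type b) solution `R₁` with rows
`(s⁻¹,0,0,0), (0,γ,0,0), (0,s⁻¹-s,γ⁻¹,0), (0,0,0,−s)`. -/
noncomputable def R2 (s γ : ℂ) : Matrix (Fin 2 × Fin 2) (Fin 2 × Fin 2) ℂ :=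
  fun p q =>
    if p = q then
      (if p = ((0 : Fin 2), (0 : Fin 2)) then s⁻¹
       else if p = ((0 : Fin 2), (1 : Fin 2)) then γ
       else if p = ((1 : Fin 2), (0 : Fin 2)) then γ⁻¹
       else -s)
    else if p = ((1 : Fin 2), (0 : Fin 2)) ∧ q = ((0 : Fin 2), (1 : Fin 2)) then s⁻¹ - s
    else 0

lemma R2e_0000 (s γ : ℂ) : R2 s γ ((0:Fin 2),(0:Fin 2)) ((0:Fin 2),(0:Fin 2)) = s⁻¹ := by simp [R2, Prod.ext_iff]
lemma R2e_0001 (s γ : ℂ) : R2 s γ ((0:Fin 2),(0:Fin 2)) ((0:Fin 2),(1:Fin 2)) = 0 := by simp [R2, Prod.ext_iff]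
lemma R2e_0010 (s γ : ℂ) : R2 s γ ((0:Fin 2),(0:Fin 2)) ((1:Fin 2),(0:Fin 2)) = 0 := by simp [R2, Prod.ext_iff]
lemma R2e_0011 (s γ : ℂ) : R2 s γ ((0:Fin 2),(0:Fin 2)) ((1:Fin 2),(1:Fin 2)) = 0 := by simp [R2, Prod.ext_iff]
lemma R2e_0100 (s γ : ℂ) : R2 s γ ((0:Fin 2),(1:Fin 2)) ((0:Fin 2),(0:Fin 2)) = 0 := by simp [R2, Prod.ext_iff]
lemma R2e_0101 (s γ : ℂ) : R2 s γ ((0:Fin 2),(1:Fin 2)) ((0:Fin 2),(1:Fin 2)) = γ := by simp [R2, Prod.ext_iff]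
lemma R2e_0110 (s γ : ℂ) : R2 s γ ((0:Fin 2),(1:Fin 2)) ((1:Fin 2),(0:Fin 2)) = 0 := by simp [R2, Prod.ext_iff]
lemma R2e_0111 (s γ : ℂ) : R2 s γ ((0:Fin 2),(1:Fin 2)) ((1:Fin 2),(1:Fin 2)) = 0 := by simp [R2, Prod.ext_iff]
lemma R2e_1000 (s γ : ℂ) : R2 s γ ((1:Fin 2),(0:Fin 2)) ((0:Fin 2),(0:Fin 2)) = 0 := by simp [R2, Prod.ext_iff]
lemma R2e_1001 (s γ : ℂ) : R2 s γ ((1:Fin 2),(0:Fin 2)) ((0:Fin 2),(1:Fin 2)) = s⁻¹ - s := by simp [R2, Prod.ext_iff]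
lemma R2e_1010 (s γ : ℂ) : R2 s γ ((1:Fin 2),(0:Fin 2)) ((1:Fin 2),(0:Fin 2)) = γ⁻¹ := by simp [R2, Prod.ext_iff]
lemma R2e_1011 (s γ : ℂ) : R2 s γ ((1:Fin 2),(0:Fin 2)) ((1:Fin 2),(1:Fin 2)) = 0 := by simp [R2, Prod.ext_iff]
lemma R2e_1100 (s γ : ℂ) : R2 s γ ((1:Fin 2),(1:Fin 2)) ((0:Fin 2),(0:Fin 2)) = 0 := by simp [R2, Prod.ext_iff]
lemma R2e_1101 (s γ : ℂ) : R2 s γ ((1:Fin 2),(1:Fin 2)) ((0:Fin 2),(1:Fin 2)) = 0 := by simp [R2, Prod.ext_iff]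
lemma R2e_1110 (s γ : ℂ) : R2 s γ ((1:Fin 2),(1:Fin 2)) ((1:Fin 2),(0:Fin 2)) = 0 := by simp [R2, Prod.ext_iff]
lemma R2e_1111 (s γ : ℂ) : R2 s γ ((1:Fin 2),(1:Fin 2)) ((1:Fin 2),(1:Fin 2)) = -s := by simp [R2, Prod.ext_iff]

set_option maxHeartbeats 1000000 in
theorem R2_yang_baxter (s γ : ℂ) (hs : s ≠ 0) (hγ : γ ≠ 0) :
    lift12 (R2 s γ) * lift13 (R2 s γ) * lift23 (R2 s γ)
      = lift23 (R2 s γ) * lift13 (R2 s γ) * lift12 (R2 s γ) := by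
  ext ⟨a,b,c⟩ ⟨d,e,f⟩
  fin_cases a <;> fin_cases b <;> fin_cases c <;> fin_cases d <;> fin_cases e <;> fin_cases f <;>
    simp only [Matrix.mul_apply, lift12, lift13, lift23, Fintype.sum_prod_type, Fin.sum_univ_two,
      Fin.zero_eta, Fin.mk_one, Fin.isValue,
      R2e_0000, R2e_0001, R2e_0010, R2e_0011, R2e_0100, R2e_0101, R2e_0110, R2e_0111,
      R2e_1000, R2e_1001, R2e_1010, R2e_1011, R2e_1100, R2e_1101, R2e_1110, R2e_1111,
      mul_zero, zero_mul, mul_one, one_mul, add_zero, zero_add,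
      Fin.zero_eq_one_iff, Fin.one_eq_zero_iff, Nat.succ_ne_self, ite_false, ite_true,
      Ne, OfNat.ofNat_ne_one, not_false_iff, if_true, if_false]
  all_goals first
    | (field_simp; ring1)
    | (field_simp; left; trivial)
    | (field_simp; left; ring1)
    | field_simp
    | ring1
    | (left; trivial)
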